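/- arXiv:2305.00528 — 4 statements merged into one kernel-verified Lean document; each statement's English description precedes it below -/
import Mathlib

section
/- Let B ≥ 1 be an integer, α a natural number with 1 < α < 2^{2B}, and set t_i = α^i. Suppose U'(i) = σ√(2 log(4K t_i²/δ)/t_i) for constants σ > 0, K ≥ 1, δ > 0. Define U(0) = b - a and U(i) = U'(i) + (1/2^B)(U'(i) + U(i-1)). Then for all i ≥ 1, U(i) ≤ (1 + 1/2^B) · (2^B/(2^B - √α)) · U'(i) + (1/2^B)^i (b - a). -/
/-!
Since `t (j+1) = α t j` and the logarithm in `U'` grows with `t`, the widths satisfy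
`U' j ≤ √α U' (j+1)`. Unrolling the recurrence `U i = (1 + q) U' i + q U (i-1)` with
`q = 2^{-B}` then bounds the width-dependent part of `U i` by `(1 + q) U' i ∑ (q √α)^k`, and
`q √α < 1` makes this geometric series converge to `(1 + q) 2^B / (2^B - √α)`.
-/

open Real

noncomputable def subgaussianWidth (σ K δ t : ℝ) : ℝ :=
  σ * √(2 * log (4 * K * t ^ 2 / δ) / t)

lemma subgaussianWidth_nonneg {σ : ℝ} (hσ : 0 ≤ σ) (K δ t : ℝ) :
    0 ≤ subgaussianWidth σ K δ t :=
  mul_nonneg hσ (sqrt_nonneg _)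

lemma subgaussianWidth_le_sqrt_mul {σ K δ t a : ℝ} (hσ : 0 ≤ σ) (hK : 0 < K) (hδ : 0 < δ)
    (ht : 0 < t) (ha : 1 ≤ a) :
    subgaussianWidth σ K δ t ≤ √a * subgaussianWidth σ K δ (a * t) := by
  have ha0 : 0 < a := one_pos.trans_le ha
  have hlog : log (4 * K * t ^ 2 / δ) ≤ log (4 * K * (a * t) ^ 2 / δ) := by
    apply log_le_log (by positivity)
    gcongr
    nlinarith
  have hscale : a * (2 * log (4 * K * (a * t) ^ 2 / δ) / (a * t))
      = 2 * log (4 * K * (a * t) ^ 2 / δ) / t := by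
    field_simp
  unfold subgaussianWidth
  rw [mul_left_comm, ← sqrt_mul ha0.le, hscale]
  gcongr

lemma geometric_constant_fixed {r s : ℝ} (hsr : s < r) (hs : 0 ≤ s) :
    (1 + 1 / r) + 1 / r * s * ((1 + 1 / r) * (r / (r - s))) = (1 + 1 / r) * (r / (r - s)) := by
  have hr : r ≠ 0 := (hs.trans_lt hsr).ne'
  have hrs : r - s ≠ 0 := (sub_pos.2 hsr).ne'
  field_simp
  ring

lemma le_of_width_recurrence {q s C : ℝ} {U W : ℕ → ℝ} (hq : 0 ≤ q) (hC : 0 ≤ C)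
    (hfix : (1 + q) + q * s * C ≤ C) (hW : ∀ n, 0 ≤ W n) (hWs : ∀ n, W n ≤ s * W (n + 1))
    (hU : ∀ n, U (n + 1) = W (n + 1) + q * (W (n + 1) + U n)) (n : ℕ) :
    U n ≤ C * W n + q ^ n * U 0 := by
  induction n with
  | zero => simpa using mul_nonneg hC (hW 0)
  | succ n ih =>
    have hWn : C * W n ≤ C * s * W (n + 1) := by
      simpa only [mul_assoc] using mul_le_mul_of_nonneg_left (hWs n) hC
    have hfixW := mul_le_mul_of_nonneg_right hfix (hW (n + 1))
    calc U (n + 1) = (1 + q) * W (n + 1) + q * U n := by rw [hU]; ring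
      _ ≤ (1 + q) * W (n + 1) + q * (C * s * W (n + 1) + q ^ n * U 0) := by
        gcongr; linarith
      _ = ((1 + q) + q * s * C) * W (n + 1) + q ^ (n + 1) * U 0 := by ring
      _ ≤ C * W (n + 1) + q ^ (n + 1) * U 0 := by linarith

theorem ICQ_width_geometric_bound_general (B : ℕ) (α : ℕ) (hα1 : 1 < α)
    (hα2 : α < 2 ^ (2 * B)) (σ : ℝ) (hσ : 0 < σ) (K : ℝ) (hK : 1 ≤ K)
    (δ : ℝ) (hδ : 0 < δ) (a b : ℝ)
    (t : ℕ → ℕ) (ht : ∀ i, t i = α ^ i)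
    (U U' : ℕ → ℝ)
    (hU' : ∀ i, U' i = σ * Real.sqrt (2 * Real.log (4 * K * (t i : ℝ) ^ 2 / δ) / (t i : ℝ)))
    (hU0 : U 0 = b - a)
    (hUrec : ∀ i, 1 ≤ i → U i = U' i + (1 / 2 ^ B) * (U' i + U (i - 1))) :
    ∀ i, 1 ≤ i →
      U i ≤ (1 + 1 / 2 ^ B) * ((2 ^ B : ℝ) / (2 ^ B - Real.sqrt α)) * U' i
        + (1 / 2 ^ B : ℝ) ^ i * (b - a) := by
  intro i _
  have hα : (1 : ℝ) ≤ α := by exact_mod_cast hα1.le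
  have hsqrt : √(α : ℝ) < 2 ^ B := by
    rw [sqrt_lt' (by positivity), ← pow_mul, mul_comm]
    exact_mod_cast hα2
  have hU'eq : ∀ j, U' j = subgaussianWidth σ K δ ((α : ℝ) ^ j) := fun j => by
    rw [hU', ht]; push_cast; rfl
  have hstep : ∀ j, U' j ≤ √(α : ℝ) * U' (j + 1) := fun j => by
    rw [hU'eq, hU'eq, pow_succ']
    exact subgaussianWidth_le_sqrt_mul hσ.le (by linarith) hδ (by positivity) hα
  rw [← hU0]
  refine le_of_width_recurrence (by positivity) ?_
    (geometric_constant_fixed hsqrt (sqrt_nonneg _)).le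
    (fun j => hU'eq j ▸ subgaussianWidth_nonneg hσ.le _ _ _) hstep
    (fun n => by simpa using hUrec (n + 1) n.succ_pos) i
  have := sub_pos.2 hsqrt
  positivity

/-- In the ICQ-SE setup with `t i = α^i` and subgaussian confidence widths `U'`,
the inflated width `U` is bounded by a geometric-sum constant times `U' i`
plus an exponentially vanishing term. -/
theorem ICQ_width_geometric_bound (B : ℕ) (hB : 1 ≤ B) (α : ℕ) (hα1 : 1 < α)
    (hα2 : α < 2 ^ (2 * B)) (σ : ℝ) (hσ : 0 < σ) (K : ℝ) (hK : 1 ≤ K)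
    (δ : ℝ) (hδ : 0 < δ) (a b : ℝ)
    (t : ℕ → ℕ) (ht : ∀ i, t i = α ^ i)
    (U U' : ℕ → ℝ)
    (hU' : ∀ i, U' i = σ * Real.sqrt (2 * Real.log (4 * K * (t i : ℝ) ^ 2 / δ) / (t i : ℝ)))
    (hU0 : U 0 = b - a)
    (hUrec : ∀ i, 1 ≤ i → U i = U' i + (1 / 2 ^ B) * (U' i + U (i - 1))) :
    ∀ i, 1 ≤ i →
      U i ≤ (1 + 1 / 2 ^ B) * ((2 ^ B : ℝ) / (2 ^ B - Real.sqrt α)) * U' i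
        + (1 / 2 ^ B : ℝ) ^ i * (b - a) :=
  ICQ_width_geometric_bound_general B α hα1 hα2 σ hσ K hK δ hδ a b t ht U U' hU' hU0 hUrec
end

section
/- Let B ≥ 1, α ∈ ℕ with 1 < α < 2^{2B}, t_i = α^i, and U'(i) = σ√(2 log(4K t_i²/δ)/t_i). Define U by U(0) = b-a and U(i) = U'(i) + (1/2^B)(U'(i) + U(i-1)). If δ < 4Kα² exp(-(b-a)²/(2σ²)), then for all i ≥ 1, U(i) ≤ 2c · U'(i), where c = (1 + 1/2^B) · 2^B/(2^B - √α). -/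
/-!
Writing `s = √α` and `q = 2⁻ᴮ`, the unquantized widths grow by at most a factor `s` per
step backwards, `U' i ≤ s · U' (i+1)`, and the smallness of `δ` makes the initial width
`b - a` at most `s · U' 1`. An induction on `U i ≤ C · s · U' (i+1)` then closes with
`C = (1 + q)/(1 - q s)`, since this `C` solves `(1 + q) + q s C = C`. This `C` is `c`, so
the factor `2` is slack; `q s < 1` is exactly `α < 2^{2B}`.
-/

open Real

noncomputable def confWidth (σ K δ t : ℝ) : ℝ :=
  σ * √(2 * log (4 * K * t ^ 2 / δ) / t)

theorem le_mul_of_inflated_recursion {q s : ℝ} {U W : ℕ → ℝ} (hq : 0 ≤ q) (hs : 0 ≤ s)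
    (hqs : q * s < 1) (hW : ∀ i, 0 ≤ W i) (hWs : ∀ i, W i ≤ s * W (i + 1))
    (h0 : U 0 ≤ s * W 1) (hrec : ∀ i, U (i + 1) = W (i + 1) + q * (W (i + 1) + U i)) (i : ℕ) :
    U (i + 1) ≤ (1 + q) / (1 - q * s) * W (i + 1) := by
  set C := (1 + q) / (1 - q * s)
  have hC : C * (1 - q * s) = 1 + q := div_mul_cancel₀ _ (by linarith)
  have hC1 : 1 ≤ C := by rw [one_le_div (by linarith)]; linarith [mul_nonneg hq hs]
  have hstep : ∀ j, U j ≤ C * s * W (j + 1) → U (j + 1) ≤ C * W (j + 1) := fun j hj => by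
    have hCW : C * (1 - q * s) * W (j + 1) = (1 + q) * W (j + 1) := by rw [hC]
    rw [hrec]
    linarith [mul_le_mul_of_nonneg_left hj hq]
  suffices h : ∀ j, U j ≤ C * s * W (j + 1) from hstep i (h i)
  intro j
  induction j with
  | zero =>
    rw [mul_assoc]
    exact h0.trans (le_mul_of_one_le_left (mul_nonneg hs (hW 1)) hC1)
  | succ j ih =>
    calc U (j + 1) ≤ C * W (j + 1) := hstep j ih
      _ ≤ C * (s * W (j + 2)) := mul_le_mul_of_nonneg_left (hWs _) (by linarith)
      _ = C * s * W (j + 2) := by ring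

theorem sqrt_mul_confWidth_mul {α : ℝ} (hα : 0 < α) (σ K δ t : ℝ) :
    √α * confWidth σ K δ (α * t) = σ * √(2 * log (4 * K * (α * t) ^ 2 / δ) / t) := by
  rw [confWidth, mul_left_comm, ← sqrt_mul hα.le]
  congr 2
  field_simp

theorem confWidth_le_sqrt_mul_confWidth_mul {σ K δ α t : ℝ} (hσ : 0 ≤ σ) (hK : 0 < K)
    (hδ : 0 < δ) (hα : 1 ≤ α) (ht : 0 < t) :
    confWidth σ K δ t ≤ √α * confWidth σ K δ (α * t) := by
  rw [sqrt_mul_confWidth_mul (by linarith), confWidth]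
  gcongr
  nlinarith

theorem le_mul_sqrt_two_log_of_lt_mul_exp {x σ M δ : ℝ} (hσ : 0 < σ) (hδ : 0 < δ)
    (h : δ < M * exp (-x ^ 2 / (2 * σ ^ 2))) : x ≤ σ * √(2 * log (M / δ)) := by
  set y := x ^ 2 / (2 * σ ^ 2)
  have hexp : exp y < M / δ := by
    rw [neg_div] at h
    rw [lt_div_iff₀ hδ]
    calc exp y * δ < exp y * (M * exp (-y)) := mul_lt_mul_of_pos_left h (exp_pos y)
      _ = M := by rw [mul_left_comm, ← exp_add, add_neg_cancel, exp_zero, mul_one]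
  have hlog : y < log (M / δ) := (lt_log_iff_exp_lt ((exp_pos y).trans hexp)).2 hexp
  calc x ≤ |x| := le_abs_self x
    _ = √(x ^ 2) := (sqrt_sq_eq_abs x).symm
    _ ≤ √(σ ^ 2 * (2 * log (M / δ))) := by
        gcongr
        rw [div_lt_iff₀ (by positivity)] at hlog
        linarith
    _ = σ * √(2 * log (M / δ)) := by rw [sqrt_mul (sq_nonneg σ), sqrt_sq hσ.le]

theorem ICQ_width_two_c_bound_general (B : ℕ) (α : ℕ) (hα1 : 1 < α)
    (hα2 : α < 2 ^ (2 * B)) (σ : ℝ) (hσ : 0 < σ) (K : ℝ) (hK : 1 ≤ K)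
    (a b : ℝ)
    (δ : ℝ) (hδ0 : 0 < δ)
    (hδ : δ < 4 * K * (α : ℝ) ^ 2 * Real.exp (-(b - a) ^ 2 / (2 * σ ^ 2)))
    (t : ℕ → ℕ) (ht : ∀ i, t i = α ^ i)
    (U U' : ℕ → ℝ)
    (hU' : ∀ i, U' i = σ * Real.sqrt (2 * Real.log (4 * K * (t i : ℝ) ^ 2 / δ) / (t i : ℝ)))
    (hU0 : U 0 = b - a)
    (hUrec : ∀ i, 1 ≤ i → U i = U' i + (1 / 2 ^ B) * (U' i + U (i - 1))) :
    ∀ i, 1 ≤ i →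
      U i ≤ 2 * ((1 + 1 / 2 ^ B) * ((2 ^ B : ℝ) / (2 ^ B - Real.sqrt α))) * U' i := by
  intro i hi
  obtain ⟨i, rfl⟩ := Nat.exists_eq_add_of_le' hi
  have hα : (1 : ℝ) ≤ α := by exact_mod_cast hα1.le
  have hW : ∀ i, U' i = confWidth σ K δ ((α : ℝ) ^ i) := fun i => by
    rw [hU', ht, confWidth]; push_cast; rfl
  have hW0 : ∀ i, 0 ≤ U' i := fun i => by rw [hU']; positivity
  have hsqrt : √(α : ℝ) < 2 ^ B := by
    rw [sqrt_lt' (by positivity), ← pow_mul, mul_comm]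
    exact_mod_cast hα2
  have hqs : 1 / 2 ^ B * √(α : ℝ) < 1 := by
    rwa [one_div_mul_eq_div, div_lt_one (by positivity)]
  have hbase : U 0 ≤ √(α : ℝ) * U' 1 := by
    have h1 := sqrt_mul_confWidth_mul (α := α) (by positivity) σ K δ 1
    rw [mul_one, div_one] at h1
    rw [hU0, hW, pow_one, h1]
    exact le_mul_sqrt_two_log_of_lt_mul_exp hσ hδ0 hδ
  have hgrowth : ∀ i, U' i ≤ √(α : ℝ) * U' (i + 1) := fun i => by
    rw [hW, hW, pow_succ']
    exact confWidth_le_sqrt_mul_confWidth_mul hσ.le (by linarith) hδ0 hα (by positivity)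
  have key := le_mul_of_inflated_recursion (by positivity) (sqrt_nonneg _) hqs hW0 hgrowth hbase
    (fun i => hUrec (i + 1) (by omega)) i
  have hC : (1 + 1 / 2 ^ B) * ((2 ^ B : ℝ) / (2 ^ B - √(α : ℝ)))
      = (1 + 1 / 2 ^ B) / (1 - 1 / 2 ^ B * √(α : ℝ)) := by
    field_simp
  have hCW : 0 ≤ (1 + 1 / 2 ^ B) / (1 - 1 / 2 ^ B * √(α : ℝ)) * U' (i + 1) :=
    mul_nonneg (div_nonneg (by positivity) (by linarith)) (hW0 _)
  rw [hC]
  linarith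

/-- Lemma 3 of the ICQ-SE analysis: for sufficiently small confidence parameter `δ`,
the inflated confidence width `U i` is within a factor `2c` of the unquantized width
`U' i`, where `c = (1 + 1/2^B) · 2^B/(2^B − √α)`. -/
theorem ICQ_width_two_c_bound (B : ℕ) (hB : 1 ≤ B) (α : ℕ) (hα1 : 1 < α)
    (hα2 : α < 2 ^ (2 * B)) (σ : ℝ) (hσ : 0 < σ) (K : ℝ) (hK : 1 ≤ K)
    (a b : ℝ) (hab : a < b)
    (δ : ℝ) (hδ0 : 0 < δ)
    (hδ : δ < 4 * K * (α : ℝ) ^ 2 * Real.exp (-(b - a) ^ 2 / (2 * σ ^ 2)))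
    (t : ℕ → ℕ) (ht : ∀ i, t i = α ^ i)
    (U U' : ℕ → ℝ)
    (hU' : ∀ i, U' i = σ * Real.sqrt (2 * Real.log (4 * K * (t i : ℝ) ^ 2 / δ) / (t i : ℝ)))
    (hU0 : U 0 = b - a)
    (hUrec : ∀ i, 1 ≤ i → U i = U' i + (1 / 2 ^ B) * (U' i + U (i - 1))) :
    ∀ i, 1 ≤ i →
      U i ≤ 2 * ((1 + 1 / 2 ^ B) * ((2 ^ B : ℝ) / (2 ^ B - Real.sqrt α))) * U' i :=
  ICQ_width_two_c_bound_general B α hα1 hα2 σ hσ K hK a b δ hδ0 hδ t ht U U' hU' hU0 hUrec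
end

section
/- Let μ, μ̂_i, μ̃_i (i ≥ 0) be real numbers with μ̃_0 ∈ [a,b] and μ ∈ [a,b]. Suppose for each i ≥ 1: |μ̃_i − μ̂_i| ≤ (1/2^{B+1}) · 2(U'(i) + U(i−1)) whenever μ̂_i ∈ [μ̃_{i−1} − U'(i) − U(i−1), μ̃_{i−1} + U'(i) + U(i−1)], where U(0) = b−a and U(i) = U'(i) + (1/2^B)(U'(i) + U(i−1)). Then the event ∪_{i≥1}{|μ̃_i − μ| > U(i)} is contained in the event ∪_{i≥1}{|μ̂_i − μ| > U'(i)}. -/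
/-!
Assume every empirical mean is good, `|μ̂ i - μ| ≤ U' i`. Then, by induction on `i`, the decoded
value stays good, `|μ̃ i - μ| ≤ U i`: if `μ̃ (i-1)` is within `U (i-1)` of `μ`, the triangle
inequality puts `μ̂ i` inside the quantizer's interval around `μ̃ (i-1)`, so the quantization
error is at most `U i - U' i`, and a second triangle inequality through `μ̂ i` closes the step.
-/

lemma abs_sub_le_of_quantization_step {μ prev hat new u u' e : ℝ}
    (hprev : |prev - μ| ≤ u) (hhat : |hat - μ| ≤ u')
    (hquant : |hat - prev| ≤ u' + u → |new - hat| ≤ e) :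
    |new - μ| ≤ u' + e := by
  have hin : |hat - prev| ≤ u' + u :=
    calc |hat - prev| ≤ |hat - μ| + |μ - prev| := abs_sub_le _ _ _
      _ ≤ u' + u := add_le_add hhat (by rwa [abs_sub_comm])
  calc |new - μ| ≤ |new - hat| + |hat - μ| := abs_sub_le _ _ _
    _ ≤ e + u' := add_le_add (hquant hin) hhat
    _ = u' + e := add_comm _ _

lemma abs_sub_le_of_forall_quantization_step {μ : ℝ} {μhat μtil U U' : ℕ → ℝ}
    (h0 : |μtil 0 - μ| ≤ U 0) (hhat : ∀ i, |μhat (i + 1) - μ| ≤ U' (i + 1))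
    (hquant : ∀ i, |μhat (i + 1) - μtil i| ≤ U' (i + 1) + U i →
      |μtil (i + 1) - μhat (i + 1)| ≤ U (i + 1) - U' (i + 1)) :
    ∀ i, |μtil i - μ| ≤ U i
  | 0 => h0
  | i + 1 => by
    simpa only [add_sub_cancel] using abs_sub_le_of_quantization_step
      (abs_sub_le_of_forall_quantization_step h0 hhat hquant i) (hhat i) (hquant i)

theorem ICQ_error_event_inclusion_general (B : ℕ) (a b : ℝ) (μ : ℝ)
    (μhat μtil : ℕ → ℝ) (U U' : ℕ → ℝ)
    (hμtil0 : μtil 0 ∈ Set.Icc a b) (hμ : μ ∈ Set.Icc a b)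
    (hU0 : U 0 = b - a)
    (hUrec : ∀ i, 1 ≤ i → U i = U' i + (1 / 2 ^ B) * (U' i + U (i - 1)))
    (hquant : ∀ i, 1 ≤ i →
      |μhat i - μtil (i - 1)| ≤ U' i + U (i - 1) →
      |μtil i - μhat i| ≤ (1 / 2 ^ (B + 1)) * (2 * (U' i + U (i - 1)))) :
    (∃ i, 1 ≤ i ∧ U i < |μtil i - μ|) → (∃ i, 1 ≤ i ∧ U' i < |μhat i - μ|) := by
  contrapose!
  intro hgood n _
  have h0 : |μtil 0 - μ| ≤ U 0 := hU0 ▸ Real.dist_le_of_mem_Icc hμtil0 hμ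
  have herror : ∀ i, 1 / 2 ^ (B + 1) * (2 * (U' (i + 1) + U i)) = U (i + 1) - U' (i + 1) := by
    intro i
    rw [hUrec (i + 1) i.succ_pos, Nat.add_sub_cancel, pow_succ]
    ring
  refine abs_sub_le_of_forall_quantization_step h0 (fun i ↦ hgood (i + 1) i.succ_pos)
    (fun i hin ↦ ?_) n
  have hq := hquant (i + 1) i.succ_pos hin
  rwa [Nat.add_sub_cancel, herror] at hq

/-- Lemma 1 of the ICQ analysis (deterministic version): if the quantization error at each
round `i ≥ 1` is at most `(1/2^B)(U'(i) + U(i-1))` whenever the empirical mean `μ̂ i` lies in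
the interval of half-width `U'(i) + U(i-1)` centered at the previous decoded value `μ̃ (i-1)`,
then the event `∪_{i≥1} {|μ̃ i − μ| > U i}` is contained in `∪_{i≥1} {|μ̂ i − μ| > U' i}`. -/
theorem ICQ_error_event_inclusion (B : ℕ) (hB : 1 ≤ B) (a b : ℝ) (μ : ℝ)
    (μhat μtil : ℕ → ℝ) (U U' : ℕ → ℝ)
    (hμtil0 : μtil 0 ∈ Set.Icc a b) (hμ : μ ∈ Set.Icc a b)
    (hU0 : U 0 = b - a)
    (hUrec : ∀ i, 1 ≤ i → U i = U' i + (1 / 2 ^ B) * (U' i + U (i - 1)))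
    (hquant : ∀ i, 1 ≤ i →
      |μhat i - μtil (i - 1)| ≤ U' i + U (i - 1) →
      |μtil i - μhat i| ≤ (1 / 2 ^ (B + 1)) * (2 * (U' i + U (i - 1)))) :
    (∃ i, 1 ≤ i ∧ U i < |μtil i - μ|) → (∃ i, 1 ≤ i ∧ U' i < |μhat i - μ|) :=
  ICQ_error_event_inclusion_general B a b μ μhat μtil U U' hμtil0 hμ hU0 hUrec hquant
end

section
/- Let σ, K, δ > 0, Δ > 0, c ≥ 1, and set a = Δ²/(256 c² σ²) and b = ln(4K/δ)/2. Assume a e^{−b} < 1/e. If t ≥ (e/(e−1)) · (256 c² σ²/Δ²) · (b − ln a), then σ√(2 ln(4K t²/δ)/t) ≤ Δ/(8c). -/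
/-- Explicit sufficient sample size for the subgaussian confidence width
`σ√(2 ln(4K t²/δ)/t)` to drop below `Δ/(8c)`. -/
theorem sufficient_sample_size (σ K δ Δ c : ℝ)
    (hσ : 0 < σ) (hK : 0 < K) (hδ : 0 < δ) (hΔ : 0 < Δ) (hc : 1 ≤ c)
    (hsmall : (Δ ^ 2 / (256 * c ^ 2 * σ ^ 2)) *
        Real.exp (-(Real.log (4 * K / δ) / 2)) < 1 / Real.exp 1)
    (t : ℝ)
    (ht : (Real.exp 1 / (Real.exp 1 - 1)) * (256 * c ^ 2 * σ ^ 2 / Δ ^ 2) *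
        (Real.log (4 * K / δ) / 2 - Real.log (Δ ^ 2 / (256 * c ^ 2 * σ ^ 2))) ≤ t) :
    σ * Real.sqrt (2 * Real.log (4 * K * t ^ 2 / δ) / t) ≤ Δ / (8 * c) := by
  have hc0 : (0:ℝ) < c := lt_of_lt_of_le one_pos hc
  set A : ℝ := 256 * c ^ 2 * σ ^ 2 / Δ ^ 2 with hAdef
  have hApos : 0 < A := by positivity
  set b : ℝ := Real.log (4 * K / δ) / 2 with hbdef
  have haA : Δ ^ 2 / (256 * c ^ 2 * σ ^ 2) = A⁻¹ := by
    rw [hAdef]; field_simp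
  have hloga : Real.log (Δ ^ 2 / (256 * c ^ 2 * σ ^ 2)) = - Real.log A := by
    rw [haA, Real.log_inv]
  have hE1 : (0:ℝ) < Real.exp 1 := Real.exp_pos 1
  have hE : (1:ℝ) < Real.exp 1 := by
    have := Real.exp_one_gt_d9; linarith
  -- From hsmall: 1 < b + log A
  have h1 : 1 < b + Real.log A := by
    have h' : Real.exp (-(Real.log A) + -b) < Real.exp (-1) := by
      rw [Real.exp_add, Real.exp_neg (Real.log A), Real.exp_log hApos]
      rw [Real.exp_neg 1]
      calc A⁻¹ * Real.exp (-b) = (Δ ^ 2 / (256 * c ^ 2 * σ ^ 2)) * Real.exp (-b) := by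
            rw [haA]
        _ < 1 / Real.exp 1 := hsmall
        _ = (Real.exp 1)⁻¹ := one_div _
    have := Real.exp_lt_exp.mp h'
    linarith
  have htlb : Real.exp 1 / (Real.exp 1 - 1) * A * (b + Real.log A) ≤ t := by
    calc Real.exp 1 / (Real.exp 1 - 1) * A * (b + Real.log A)
        = Real.exp 1 / (Real.exp 1 - 1) * A *
          (b - Real.log (Δ ^ 2 / (256 * c ^ 2 * σ ^ 2))) := by rw [hloga]; ring
      _ ≤ t := ht
  have htpos : 0 < t := by
    have hcoef : 0 < Real.exp 1 / (Real.exp 1 - 1) * A :=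
      mul_pos (div_pos hE1 (by linarith)) hApos
    nlinarith
  -- log u ≤ u / e with u = t / A
  have hu : 0 < t / A := div_pos htpos hApos
  have hlogu : Real.log (t / A) ≤ t / A / Real.exp 1 := by
    have h2 : Real.log (t / A / Real.exp 1) ≤ t / A / Real.exp 1 - 1 :=
      Real.log_le_sub_one_of_pos (by positivity)
    rw [Real.log_div (ne_of_gt hu) (ne_of_gt hE1), Real.log_exp] at h2
    linarith
  have hlogt : Real.log t ≤ Real.log A + t / A / Real.exp 1 := by
    have := Real.log_div (ne_of_gt htpos) (ne_of_gt hApos)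
    linarith [hlogu, this ▸ hlogu]
  -- key inequality : b + log t ≤ t / A
  have hkey : b + Real.log t ≤ t / A := by
    have hEm : 0 < Real.exp 1 - 1 := by linarith
    have h3' : Real.exp 1 * A * (b + Real.log A) ≤ t * (Real.exp 1 - 1) := by
      rw [div_mul_eq_mul_div, div_mul_eq_mul_div, div_le_iff₀ hEm] at htlb
      linarith
    have h4 : (b + Real.log A) ≤ t * (Real.exp 1 - 1) / (A * Real.exp 1) := by
      rw [le_div_iff₀ (by positivity)]
      linarith
    have h5 : t * (Real.exp 1 - 1) / (A * Real.exp 1) = t / A - t / A / Real.exp 1 := by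
      field_simp
    linarith [hlogt]
  -- rewrite the big log
  have hL : Real.log (4 * K * t ^ 2 / δ) = 2 * b + 2 * Real.log t := by
    have : 4 * K * t ^ 2 / δ = (4 * K / δ) * t ^ 2 := by ring
    rw [this, Real.log_mul (by positivity) (by positivity), Real.log_pow]
    rw [hbdef]; push_cast; ring
  have hbound : 2 * Real.log (4 * K * t ^ 2 / δ) / t ≤ (Δ / (8 * c * σ)) ^ 2 := by
    have hAval : (Δ / (8 * c * σ)) ^ 2 = 4 / A := by
      rw [hAdef]; field_simp; ring
    rw [hL, hAval]
    rw [div_le_div_iff₀ htpos hApos]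
    have hk2 : (b + Real.log t) * A ≤ t := by
      rw [← le_div_iff₀ hApos]; exact hkey
    nlinarith [hk2]
  calc σ * Real.sqrt (2 * Real.log (4 * K * t ^ 2 / δ) / t)
      ≤ σ * (Δ / (8 * c * σ)) := by
        apply mul_le_mul_of_nonneg_left _ (le_of_lt hσ)
        calc Real.sqrt (2 * Real.log (4 * K * t ^ 2 / δ) / t)
            ≤ Real.sqrt ((Δ / (8 * c * σ)) ^ 2) := Real.sqrt_le_sqrt hbound
          _ = Δ / (8 * c * σ) := Real.sqrt_sq (by positivity)
    _ = Δ / (8 * c) := by field_simp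
end
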